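/- (Grad-Match/OMP convergence, Lipschitz case.) Suppose the weights satisfy, at every iteration t, ‖Σ_{i∈X^t} w^t_i ∇L_T^i(θ_t) − ∇L(θ_t)‖ + λ ‖w^t‖² ≤ ε for some λ ≥ 0 and ε > 0 (i.e., E_λ(X^t) ≤ ε). Assume ‖∇L_T^i(θ)‖ ≤ σ_T for every i and θ, and use the constant learning rate α = D/(σ_T √T). Then min_{0 ≤ t ≤ T−1} (L(θ_t) − L(θ*)) ≤ D σ_T/√T + D ε. -/

import Mathlib

open Finset

lemma convex_grad_ineq {d : ℕ} (L : EuclideanSpace ℝ (Fin d) → ℝ)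
    (hLconv : ConvexOn ℝ Set.univ L) (x g : EuclideanSpace ℝ (Fin d))
    (hg : HasGradientAt L g x) (y : EuclideanSpace ℝ (Fin d)) :
    L x + (inner ℝ g (y - x) : ℝ) ≤ L y := by
  set c : ℝ → EuclideanSpace ℝ (Fin d) := fun s => x + s • (y - x) with hc
  have hc0 : c 0 = x := by simp [hc]
  have hc1 : c 1 = y := by simp [hc]
  have hcd : HasDerivAt c (y - x) 0 := by
    simpa [hc] using ((hasDerivAt_id (0:ℝ)).smul_const (y - x)).const_add x
  have hfd : HasDerivAt (L ∘ c) (inner ℝ g (y - x) : ℝ) 0 := by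
    have h2 : HasFDerivAt L ((InnerProductSpace.toDual ℝ (EuclideanSpace ℝ (Fin d))) g) (c 0) := by
      rw [hc0]; exact hg.hasFDerivAt
    have := h2.comp_hasDerivAt 0 hcd
    simpa using this
  have hconv : ConvexOn ℝ Set.univ (L ∘ c) := by
    have h := hLconv.comp_affineMap (AffineMap.lineMap x y : ℝ →ᵃ[ℝ] EuclideanSpace ℝ (Fin d))
    have heq : (L ∘ c) = L ∘ (AffineMap.lineMap x y : ℝ →ᵃ[ℝ] EuclideanSpace ℝ (Fin d)) := by
      funext s
      simp [hc, AffineMap.lineMap_apply]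
      abel_nf
    rw [heq]
    simpa using h
  have hs := hconv.le_slope_of_hasDerivAt (Set.mem_univ (0:ℝ)) (Set.mem_univ (1:ℝ)) one_pos hfd
  rw [slope_def_field] at hs
  simp only [Function.comp_apply, hc0, hc1, sub_zero, div_one] at hs
  linarith

/-- Grad-Match/OMP convergence, Lipschitz case: if at every iteration the regularized
gradient-matching error `E_λ(X^t)` is at most `ε`, then gradient descent with the
selected weighted subsets converges up to an additive `D ε` term. -/
theorem gradmatch_omp_convergence_lipschitz
    {d : ℕ} {ι : Type*}
    (L : EuclideanSpace ℝ (Fin d) → ℝ)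
    (gL : EuclideanSpace ℝ (Fin d) → EuclideanSpace ℝ (Fin d))
    (hL : ∀ θ, HasGradientAt L (gL θ) θ)
    (hLconv : ConvexOn ℝ Set.univ L)
    (θstar : EuclideanSpace ℝ (Fin d))
    (hmin : ∀ θ, L θstar ≤ L θ)
    (LT : ι → EuclideanSpace ℝ (Fin d) → ℝ)
    (gLT : ι → EuclideanSpace ℝ (Fin d) → EuclideanSpace ℝ (Fin d))
    (hLT : ∀ i θ, HasGradientAt (LT i) (gLT i θ) θ)
    (X : ℕ → Finset ι) (w : ℕ → ι → ℝ)
    (hw0 : ∀ t, ∀ i ∈ X t, 0 ≤ w t i)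
    (hw1 : ∀ t, ∑ i ∈ X t, w t i = 1)
    (lam ε : ℝ) (hlam : 0 ≤ lam) (hε : 0 < ε)
    (θ : ℕ → EuclideanSpace ℝ (Fin d))
    (hE : ∀ t, ‖(∑ i ∈ X t, w t i • gLT i (θ t)) - gL (θ t)‖
            + lam * ∑ i ∈ X t, (w t i) ^ 2 ≤ ε)
    (D σT : ℝ) (T : ℕ) (hT : 1 ≤ T)
    (hD : ∀ t, ‖θ t - θstar‖ ≤ D)
    (hσ : ∀ i, ∀ x, ‖gLT i x‖ ≤ σT)
    (α : ℝ) (hα : α = D / (σT * Real.sqrt T))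
    (hupd : ∀ t, θ (t + 1) = θ t - α • ∑ i ∈ X t, w t i • gLT i (θ t)) :
    (Finset.range T).inf' (Finset.nonempty_range_iff.mpr (by omega))
        (fun t => L (θ t) - L θstar)
      ≤ D * σT / Real.sqrt T + D * ε := by
  set g : ℕ → EuclideanSpace ℝ (Fin d) := fun t => ∑ i ∈ X t, w t i • gLT i (θ t) with hg
  set m : ℝ := (Finset.range T).inf' (Finset.nonempty_range_iff.mpr (by omega))
      (fun t => L (θ t) - L θstar) with hm
  have hD0 : 0 ≤ D := le_trans (norm_nonneg _) (hD 0)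
  -- X 0 nonempty, so σT ≥ 0
  have hX0 : (X 0).Nonempty := by
    by_contra h
    rw [Finset.not_nonempty_iff_eq_empty] at h
    have := hw1 0
    rw [h] at this
    simp at this
  obtain ⟨i0, hi0⟩ := hX0
  have hσ0 : 0 ≤ σT := le_trans (norm_nonneg _) (hσ i0 (θ 0))
  -- error bound
  have herr : ∀ t, ‖g t - gL (θ t)‖ ≤ ε := by
    intro t
    have h1 := hE t
    have h2 : 0 ≤ lam * ∑ i ∈ X t, (w t i) ^ 2 :=
      mul_nonneg hlam (Finset.sum_nonneg fun i _ => sq_nonneg _)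
    linarith
  -- gradient norm bound
  have hgnorm : ∀ t, ‖g t‖ ≤ σT := by
    intro t
    calc ‖g t‖ ≤ ∑ i ∈ X t, ‖w t i • gLT i (θ t)‖ := norm_sum_le _ _
      _ ≤ ∑ i ∈ X t, w t i * σT := by
          apply Finset.sum_le_sum
          intro i hi
          rw [norm_smul, Real.norm_eq_abs, abs_of_nonneg (hw0 t i hi)]
          exact mul_le_mul_of_nonneg_left (hσ i (θ t)) (hw0 t i hi)
      _ = σT := by rw [← Finset.sum_mul, hw1 t, one_mul]
  -- key per-iterate bound
  have key : ∀ t, L (θ t) - L θstar ≤ (inner ℝ (g t) (θ t - θstar) : ℝ) + D * ε := by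
    intro t
    have h1 := convex_grad_ineq L hLconv (θ t) (gL (θ t)) (hL (θ t)) θstar
    have h2 : (inner ℝ (gL (θ t)) (θstar - θ t) : ℝ) = -(inner ℝ (gL (θ t)) (θ t - θstar) : ℝ) := by
      rw [← inner_neg_right, neg_sub]
    have h3 : (inner ℝ (gL (θ t)) (θ t - θstar) : ℝ)
        = (inner ℝ (g t) (θ t - θstar) : ℝ) + (inner ℝ (gL (θ t) - g t) (θ t - θstar) : ℝ) := by
      rw [inner_sub_left]; ring
    have h4 : (inner ℝ (gL (θ t) - g t) (θ t - θstar) : ℝ) ≤ ε * D := by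
      calc (inner ℝ (gL (θ t) - g t) (θ t - θstar) : ℝ)
          ≤ ‖gL (θ t) - g t‖ * ‖θ t - θstar‖ := real_inner_le_norm _ _
        _ ≤ ε * D := by
            apply mul_le_mul _ (hD t) (norm_nonneg _) hε.le
            rw [norm_sub_rev]; exact herr t
    rw [h2] at h1
    linarith [h3, h4]
  have hα0 : 0 ≤ α := by
    rw [hα]; exact div_nonneg hD0 (mul_nonneg hσ0 (Real.sqrt_nonneg _))
  -- one-step descent
  have step : ∀ t, ‖θ (t+1) - θstar‖^2
      ≤ ‖θ t - θstar‖^2 - 2*α*(inner ℝ (g t) (θ t - θstar) : ℝ) + α^2*σT^2 := by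
    intro t
    have h1 : θ (t+1) - θstar = (θ t - θstar) - α • g t := by
      rw [hupd t]; abel
    rw [h1, norm_sub_sq_real]
    have h2 : (inner ℝ (θ t - θstar) (α • g t) : ℝ) = α * (inner ℝ (g t) (θ t - θstar) : ℝ) := by
      rw [real_inner_smul_right, real_inner_comm]
    have h3 : ‖α • g t‖^2 ≤ α^2*σT^2 := by
      rw [norm_smul, Real.norm_eq_abs, mul_pow, sq_abs]
      exact mul_le_mul_of_nonneg_left
        (pow_le_pow_left₀ (norm_nonneg _) (hgnorm t) 2) (sq_nonneg _)
    rw [h2]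
    nlinarith [h3]
  -- per-step with m
  have hstep' : ∀ t < T, ‖θ (t+1) - θstar‖^2
      ≤ ‖θ t - θstar‖^2 - 2*α*(m - D*ε) + α^2*σT^2 := by
    intro t ht
    have hmle : m ≤ L (θ t) - L θstar :=
      Finset.inf'_le _ (Finset.mem_range.mpr ht)
    have h1 := key t
    have h2 := step t
    nlinarith [hα0]
  -- telescoping
  have hind : ∀ n, n ≤ T → ‖θ n - θstar‖^2 ≤ D^2 + n*(α^2*σT^2 - 2*α*(m - D*ε)) := by
    intro n
    induction n with
    | zero =>
        intro _
        simp only [Nat.cast_zero, zero_mul, add_zero]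
        exact pow_le_pow_left₀ (norm_nonneg _) (hD 0) 2
    | succ k ih =>
        intro hk
        have h1 := hstep' k (by omega)
        have h2 := ih (by omega)
        push_cast
        push_cast at h2
        nlinarith
  have hfin : 0 ≤ D^2 + (T:ℝ)*(α^2*σT^2 - 2*α*(m - D*ε)) :=
    le_trans (sq_nonneg _) (hind T le_rfl)
  -- degenerate cases
  by_cases hDz : D = 0
  · subst hDz
    have hz : θ 0 - θstar = 0 := norm_le_zero_iff.mp (hD 0)
    have hmle : m ≤ L (θ 0) - L θstar :=
      Finset.inf'_le _ (Finset.mem_range.mpr (by omega))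
    have := key 0
    rw [hz, inner_zero_right] at this
    simp only [zero_mul, zero_div, zero_add] at *
    linarith
  by_cases hσz : σT = 0
  · subst hσz
    have hgz : g 0 = 0 := norm_le_zero_iff.mp (hgnorm 0)
    have hmle : m ≤ L (θ 0) - L θstar :=
      Finset.inf'_le _ (Finset.mem_range.mpr (by omega))
    have := key 0
    rw [hgz, inner_zero_left] at this
    simp only [mul_zero, zero_div, zero_add] at *
    linarith
  -- main case
  have hDpos : 0 < D := lt_of_le_of_ne hD0 (Ne.symm hDz)
  have hσpos : 0 < σT := lt_of_le_of_ne hσ0 (Ne.symm hσz)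
  set s : ℝ := Real.sqrt T with hsdef
  have hspos : 0 < s := Real.sqrt_pos.mpr (by positivity)
  have hs2 : s^2 = (T:ℝ) := Real.sq_sqrt (by positivity)
  have hαpos : 0 < α := by rw [hα]; positivity
  have hD' : D = α * (σT * s) := by rw [hα]; field_simp
  rw [← hs2] at hfin
  rw [div_add' _ _ _ hspos.ne', le_div_iff₀ hspos]
  rw [hD'] at hfin ⊢
  nlinarith [hfin, mul_pos hαpos hspos]
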